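/- arXiv:math/0504431 — 4 statements merged into one kernel-verified Lean document; each statement's English description precedes it below -/
import Mathlib

section
/- Let p be a prime and F a field of characteristic p containing F_{p^2}. For any w ∈ F, the polynomial X^p + X - w ∈ F[X] is either irreducible over F or splits into distinct linear factors over F. -/
/-!
In characteristic `p` the map `x ↦ x ^ p + x` is additive, so the roots of `X ^ p + X - w` form a
coset of the roots of `X ^ p + X`; the latter divides `X ^ (p ^ 2) - X` and hence has all its `p`
roots in `𝔽_{p²} ⊆ F`. So one root in `F` gives `p` of them. If there is none, take a monic factor
of degree `0 < d < p` and a root `α` of it in an algebraic closure: its roots are `α + cᵢ` with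
`cᵢ ∈ F`, so their sum `d • α + ∑ cᵢ` lies in `F`, and `p ∤ d` forces `α ∈ F`.
-/

open Polynomial

theorem Subfield.mem_of_sum_mem_of_sub_mem {L : Type*} [Field L] (S : Subfield L)
    {s : Multiset L} {α : L} (hsum : s.sum ∈ S) (hsub : ∀ r ∈ s, r - α ∈ S)
    (hcard : (Multiset.card s : L) ≠ 0) : α ∈ S := by
  have h : α = (Multiset.card s : L)⁻¹ * (s.sum - (s.map (· - α)).sum) := by
    rw [Multiset.sum_map_sub, Multiset.map_id', Multiset.map_const', Multiset.sum_replicate,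
      nsmul_eq_mul, sub_sub_cancel, inv_mul_cancel_left₀ hcard]
  rw [h]
  exact S.mul_mem (S.inv_mem (natCast_mem S _))
    (S.sub_mem hsum (S.multiset_sum_mem _ (by simpa using hsub)))

namespace Polynomial

section

variable {R : Type*} [CommRing R] {p : ℕ}

theorem natDegree_X_pow_add_X_sub_C [Nontrivial R] (hp : 1 < p) (w : R) :
    (X ^ p + X - C w : R[X]).natDegree = p := by
  compute_degree!
  · simp [hp.ne, (zero_lt_one.trans hp).ne']
  · omega

theorem monic_X_pow_add_X_sub_C [Nontrivial R] (hp : 1 < p) (w : R) :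
    (X ^ p + X - C w : R[X]).Monic := by
  monicity!
  simp [hp.le, hp.not_ge]

theorem separable_X_pow_add_X_sub_C [CharP R p] (w : R) :
    (X ^ p + X - C w : R[X]).Separable := by
  have h : derivative (X ^ p + X - C w : R[X]) = 1 := by simp [derivative_X_pow]
  rw [Separable, h]
  exact isCoprime_one_right

variable [Fact p.Prime] [CharP R p]

theorem X_pow_add_X_dvd_X_pow_sq_sub_X : (X ^ p + X : R[X]) ∣ X ^ p ^ 2 - X := by
  have h : (X ^ p ^ 2 - X : R[X]) = (X ^ p + X) ^ p - (X ^ p + X) := by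
    rw [add_pow_char, ← pow_mul, sq]
    ring
  rw [h]
  exact dvd_sub (dvd_pow_self _ (Fact.out : p.Prime).ne_zero) dvd_rfl

theorem IsRoot.sub_isRoot_X_pow_add_X {w x y : R} (hx : (X ^ p + X - C w).IsRoot x)
    (hy : (X ^ p + X - C w).IsRoot y) : (X ^ p + X).IsRoot (x - y) := by
  simp only [IsRoot, eval_sub, eval_add, eval_pow, eval_X, eval_C] at hx hy ⊢
  rw [sub_pow_char]
  linear_combination hx - hy

theorem X_pow_add_X_sub_C_eq_comp {w β : R} (hβ : (X ^ p + X - C w).IsRoot β) :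
    X ^ p + X - C w = (X ^ p + X : R[X]).comp (X - C β) := by
  have hw : w = β ^ p + β := by
    simp only [IsRoot, eval_sub, eval_add, eval_pow, eval_X, eval_C] at hβ
    linear_combination -hβ
  rw [hw, add_comp, X_pow_comp, X_comp, sub_pow_char, C_add, C_pow]
  ring

end

theorem splits_X_pow_add_X_galoisField (p : ℕ) [Fact p.Prime] :
    (X ^ p + X : (GaloisField p 2)[X]).Splits := by
  have hp : 1 < p := (Fact.out : p.Prime).one_lt
  have h : ((X ^ p ^ 2 - X : (ZMod p)[X]).map (algebraMap (ZMod p) (GaloisField p 2))).Splits :=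
    SplittingField.splits _
  rw [Polynomial.map_sub, Polynomial.map_pow, map_X] at h
  exact h.of_dvd (FiniteField.X_pow_card_sub_X_ne_zero _ (Nat.one_lt_pow two_ne_zero hp))
    X_pow_add_X_dvd_X_pow_sq_sub_X

section Field

variable {K : Type*} [Field K] {p : ℕ} [Fact p.Prime] [CharP K p]

theorem exists_isRoot_of_monic_dvd_X_pow_add_X_sub_C (hg : (X ^ p + X : K[X]).Splits)
    {w : K} {q : K[X]} (hq : q.Monic) (hdvd : q ∣ X ^ p + X - C w) (hq0 : 0 < q.natDegree)
    (hqp : q.natDegree < p) : ∃ β, (X ^ p + X - C w).IsRoot β := by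
  have hg0 : (X ^ p + X : K[X]) ≠ 0 := by
    simpa using (monic_X_pow_add_X_sub_C (Fact.out : p.Prime).one_lt (0 : K)).ne_zero
  let ι := algebraMap K (AlgebraicClosure K)
  have hqL : (q.map ι).Splits := IsAlgClosed.splits _
  have hcard : Multiset.card (q.map ι).roots = q.natDegree := by
    rw [← hqL.natDegree_eq_card_roots, natDegree_map]
  obtain ⟨α, hα⟩ := Multiset.card_pos_iff_exists_mem.mp (hcard ▸ hq0)
  have hroot : ∀ r ∈ (q.map ι).roots, (X ^ p + X - C (ι w)).IsRoot r := fun r hr => by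
    simpa using eval_eq_zero_of_dvd_of_eval_eq_zero (Polynomial.map_dvd ι hdvd)
      ((mem_roots (hq.map ι).ne_zero).mp hr)
  have hsum : (q.map ι).roots.sum ∈ ι.fieldRange := by
    rw [← neg_neg (q.map ι).roots.sum, ← hqL.nextCoeff_eq_neg_sum_roots_of_monic (hq.map ι),
      nextCoeff_map ι.injective]
    exact ⟨-q.nextCoeff, map_neg ι _⟩
  have hsub : ∀ r ∈ (q.map ι).roots, r - α ∈ ι.fieldRange := fun r hr =>
    hg.mem_range_of_isRoot hg0 <| by
      simpa using (hroot r hr).sub_isRoot_X_pow_add_X (hroot α hα)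
  have hdeg : (Multiset.card (q.map ι).roots : AlgebraicClosure K) ≠ 0 := by
    rw [hcard, Ne, CharP.cast_eq_zero_iff _ p]
    exact Nat.not_dvd_of_pos_of_lt hq0 hqp
  obtain ⟨β, rfl⟩ := ι.fieldRange.mem_of_sum_mem_of_sub_mem hsum hsub hdeg
  exact ⟨β, IsRoot.of_map (by simpa using hroot _ hα) ι.injective⟩

theorem irreducible_X_pow_add_X_sub_C (hg : (X ^ p + X : K[X]).Splits) {w : K}
    (hw : ∀ β, ¬(X ^ p + X - C w).IsRoot β) : Irreducible (X ^ p + X - C w) := by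
  have hp := (Fact.out : p.Prime).one_lt
  have hne : (X ^ p + X - C w : K[X]) ≠ 1 := fun h => by
    have := natDegree_X_pow_add_X_sub_C hp w
    rw [h, natDegree_one] at this
    omega
  rw [(monic_X_pow_add_X_sub_C hp w).irreducible_iff_lt_natDegree_lt hne]
  rintro q hq hdeg hdvd
  rw [Finset.mem_Ioc, natDegree_X_pow_add_X_sub_C hp] at hdeg
  obtain ⟨β, hβ⟩ := exists_isRoot_of_monic_dvd_X_pow_add_X_sub_C hg hq hdvd hdeg.1 (by omega)
  exact hw β hβ

theorem splits_X_pow_add_X_sub_C (hg : (X ^ p + X : K[X]).Splits) {w β : K}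
    (hβ : (X ^ p + X - C w).IsRoot β) : (X ^ p + X - C w).Splits := by
  rw [X_pow_add_X_sub_C_eq_comp hβ]
  exact hg.comp_X_sub_C β

end Field

end Polynomial

open scoped Classical

/-- Let `F` be a field of characteristic `p` containing `𝔽_{p²}`. For `w ∈ F`, the
polynomial `X^p + X - w` is either irreducible over `F` or splits into `p` distinct
linear factors over `F`. -/
theorem stmt_3 (p : ℕ) [Fact p.Prime] (F : Type*) [Field F] [CharP F p]
    [Algebra (GaloisField p 2) F] (w : F) :
    Irreducible (X ^ p + X - C w : F[X]) ∨
      ((X ^ p + X - C w : F[X]).Splits ∧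
        (X ^ p + X - C w : F[X]).roots.toFinset.card = p) := by
  have hg : (X ^ p + X : F[X]).Splits := by
    simpa using (splits_X_pow_add_X_galoisField p).map (algebraMap (GaloisField p 2) F)
  by_cases h : ∃ β, (X ^ p + X - C w : F[X]).IsRoot β
  · obtain ⟨β, hβ⟩ := h
    have hs := splits_X_pow_add_X_sub_C hg hβ
    refine Or.inr ⟨hs, ?_⟩
    rw [Multiset.toFinset_card_of_nodup (nodup_roots (separable_X_pow_add_X_sub_C w)),
      ← hs.natDegree_eq_card_roots, natDegree_X_pow_add_X_sub_C (Fact.out : p.Prime).one_lt]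
  · exact Or.inl (irreducible_X_pow_add_X_sub_C hg (not_exists.mp h))
end

section
/- Let p be an odd prime and K = F_{p^2}. If ξ ∈ K satisfies ξ^p + ξ ≠ 0 and η is any root in an algebraic closure of the polynomial X^p + X - ξ^{p+1}/(ξ^p + ξ), then η ∈ K and η^p + η ≠ 0. -/
open Polynomial

/-- Elements of an algebraic closure fixed by `x ↦ x^(p^n)` lie in the image of
`GaloisField p n`. -/
lemma mem_range_of_pow_card {p n : ℕ} [Fact p.Prime] (hn : n ≠ 0)
    (x : AlgebraicClosure (GaloisField p n)) (hx : x ^ p ^ n = x) :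
    x ∈ Set.range (algebraMap (GaloisField p n) (AlgebraicClosure (GaloisField p n))) := by
  classical
  set φ := algebraMap (GaloisField p n) (AlgebraicClosure (GaloisField p n)) with hφ
  have hinj : Function.Injective φ := φ.injective
  haveI : Fintype (GaloisField p n) := Fintype.ofFinite _
  have hcard : Fintype.card (GaloisField p n) = p ^ n := by
    rw [← Nat.card_eq_fintype_card]; exact GaloisField.card p n hn
  have hp1 : 1 < p := (Fact.out : p.Prime).one_lt
  set f : (AlgebraicClosure (GaloisField p n))[X] := X ^ p ^ n - X with hf
  have hfne : f ≠ 0 := FiniteField.X_pow_card_pow_sub_X_ne_zero _ hn hp1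
  have hdeg : f.natDegree = p ^ n := FiniteField.X_pow_card_pow_sub_X_natDegree_eq _ hn hp1
  set T : Finset (AlgebraicClosure (GaloisField p n)) := Finset.image φ Finset.univ with hT
  have hTcard : T.card = p ^ n := by
    rw [hT, Finset.card_image_of_injective _ hinj, Finset.card_univ, hcard]
  have hroot : ∀ y, y ^ p ^ n = y → y ∈ f.roots.toFinset := by
    intro y hy
    rw [Multiset.mem_toFinset, mem_roots hfne]
    simp [hf, hy, sub_self]
  have hTsub : T ⊆ f.roots.toFinset := by
    intro y hy
    rw [hT, Finset.mem_image] at hy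
    obtain ⟨a, -, rfl⟩ := hy
    apply hroot
    have := FiniteField.pow_card a
    rw [hcard] at this
    rw [← map_pow, this]
  have hrootsle : f.roots.toFinset.card ≤ p ^ n := by
    calc f.roots.toFinset.card ≤ Multiset.card f.roots := f.roots.toFinset_card_le
      _ ≤ f.natDegree := f.card_roots'
      _ = p ^ n := hdeg
  have hEq : T = f.roots.toFinset :=
    Finset.eq_of_subset_of_card_le hTsub (hrootsle.trans_eq hTcard.symm)
  have : x ∈ T := by rw [hEq]; exact hroot x hx
  rw [hT, Finset.mem_image] at this
  obtain ⟨a, -, rfl⟩ := this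
  exact ⟨a, rfl⟩

/-- If `ξ ∈ K = 𝔽_{p²}` satisfies `ξ^p + ξ ≠ 0` and `η` is a root in an algebraic
closure of `X^p + X - ξ^(p+1)/(ξ^p + ξ)`, then `η ∈ K` and `η^p + η ≠ 0`. -/
theorem stmt_5 (p : ℕ) [Fact p.Prime] (hodd : Odd p)
    (ξ' : GaloisField p 2)
    (hξ : ξ' ^ p + ξ' ≠ 0)
    (η : AlgebraicClosure (GaloisField p 2))
    (hη : η ^ p + η =
      algebraMap (GaloisField p 2) (AlgebraicClosure (GaloisField p 2))
        (ξ' ^ (p + 1) / (ξ' ^ p + ξ'))) :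
    η ∈ Set.range (algebraMap (GaloisField p 2) (AlgebraicClosure (GaloisField p 2))) ∧
      η ^ p + η ≠ 0 := by
  classical
  set φ := algebraMap (GaloisField p 2) (AlgebraicClosure (GaloisField p 2)) with hφ
  haveI : Fintype (GaloisField p 2) := Fintype.ofFinite _
  have hcard : Fintype.card (GaloisField p 2) = p ^ 2 := by
    rw [← Nat.card_eq_fintype_card]; exact GaloisField.card p 2 (by norm_num)
  have hξ0 : ξ' ≠ 0 := by
    rintro rfl
    exact hξ (by simp [(Fact.out : p.Prime).ne_zero])
  set c : GaloisField p 2 := ξ' ^ (p + 1) / (ξ' ^ p + ξ') with hc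
  have hcne : c ≠ 0 := div_ne_zero (pow_ne_zero _ hξ0) hξ
  -- ξ'^(p^2) = ξ'
  have hξfix : ξ' ^ p ^ 2 = ξ' := by
    have := FiniteField.pow_card ξ'
    rwa [hcard] at this
  -- c is fixed by Frobenius
  have hcp : c ^ p = c := by
    have hden : (ξ' ^ p + ξ') ^ p = ξ' ^ p + ξ' := by
      rw [add_pow_char, ← pow_mul, ← pow_two, hξfix, add_comm]
    have hnum : (ξ' ^ (p + 1)) ^ p = ξ' ^ (p + 1) := by
      rw [← pow_mul, add_mul, one_mul, ← pow_two, pow_add, hξfix, pow_add, pow_one, mul_comm]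
    rw [hc, div_pow, hnum, hden]
  have hap : (φ c) ^ p = φ c := by rw [← map_pow, hcp]
  have hηp : η ^ p = φ c - η := by
    rw [← hη]; ring
  have hηfix : η ^ p ^ 2 = η := by
    rw [pow_two, pow_mul, hηp, sub_pow_char, hap, hηp]
    ring
  refine ⟨mem_range_of_pow_card (by norm_num) η hηfix, ?_⟩
  rw [hη]
  exact fun h => hcne (φ.injective (by simpa using h))
end

section
/- Let p be an odd prime and let g(x) = x^{p+1}/(x^p + x) and h(x) = (x^{p-1} - 1)/(x^{p-1} + 1) be rational functions over F_p. Then for any α in a field of characteristic p with α^p = -α and any x with x^p + x ≠ 0 and (x+α)^p + (x+α) ≠ 0, one has g(x + α) = g(x) + α·h(x) - α^2/(x^p + x). -/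
/-! The map `t ↦ t^p + t` is additive in characteristic `p` and kills `α`, so the denominators of
`g(x + α)` and `g(x)` agree, and the numerator becomes `(x + α)^p (x + α) = (x^p - α)(x + α)`.
What remains is an identity of rational functions in `x` and `α`. -/

section CharP

variable {F : Type*} [CommRing F] {p : ℕ} [Fact p.Prime] [CharP F p] {α : F}

theorem pow_char_add_self_add_of_pow_eq_neg (hα : α ^ p = -α) (x : F) :
    (x + α) ^ p + (x + α) = x ^ p + x := by
  rw [add_pow_char, hα]
  ring

theorem add_pow_char_succ_of_pow_eq_neg (hα : α ^ p = -α) (x : F) :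
    (x + α) ^ (p + 1) = (x ^ p - α) * (x + α) := by
  rw [pow_succ, add_pow_char, hα]
  ring

end CharP

theorem div_pow_succ_add_self_eq {F : Type*} [Field F] (n : ℕ) (α x : F)
    (hx : x ^ (n + 1) + x ≠ 0) :
    (x ^ (n + 1) - α) * (x + α) / (x ^ (n + 1) + x) =
      x ^ (n + 2) / (x ^ (n + 1) + x) + α * ((x ^ n - 1) / (x ^ n + 1))
        - α ^ 2 / (x ^ (n + 1) + x) := by
  have hfactor : x ^ (n + 1) + x = (x ^ n + 1) * x := by ring
  have hx0 : x ≠ 0 := by rintro rfl; simp at hx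
  have hxn : x ^ n + 1 ≠ 0 := by rintro h; simp [hfactor, h] at hx
  rw [hfactor]
  field_simp
  ring

theorem stmt_6_general (p : ℕ) (hp : p.Prime)
    (F : Type*) [Field F] [CharP F p] (α x : F)
    (hα : α ^ p = -α) (hx : x ^ p + x ≠ 0) :
    (x + α) ^ (p + 1) / ((x + α) ^ p + (x + α)) =
      x ^ (p + 1) / (x ^ p + x)
        + α * ((x ^ (p - 1) - 1) / (x ^ (p - 1) + 1))
        - α ^ 2 / (x ^ p + x) := by
  have : Fact p.Prime := ⟨hp⟩
  rw [pow_char_add_self_add_of_pow_eq_neg hα, add_pow_char_succ_of_pow_eq_neg hα]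
  obtain ⟨n, rfl⟩ := Nat.exists_eq_add_one_of_ne_zero hp.ne_zero
  exact div_pow_succ_add_self_eq n α x hx

/-- For an odd prime `p`, in a field of characteristic `p`: if `α^p = -α`,
`x^p + x ≠ 0` and `(x+α)^p + (x+α) ≠ 0`, then
`g(x + α) = g(x) + α·h(x) - α²/(x^p + x)` where `g(x) = x^(p+1)/(x^p + x)` and
`h(x) = (x^(p-1) - 1)/(x^(p-1) + 1)`. -/
theorem stmt_6 (p : ℕ) (hp : p.Prime) (hodd : Odd p)
    (F : Type*) [Field F] [CharP F p] (α x : F)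
    (hα : α ^ p = -α) (hx : x ^ p + x ≠ 0)
    (hxα : (x + α) ^ p + (x + α) ≠ 0) :
    (x + α) ^ (p + 1) / ((x + α) ^ p + (x + α)) =
      x ^ (p + 1) / (x ^ p + x)
        + α * ((x ^ (p - 1) - 1) / (x ^ (p - 1) + 1))
        - α ^ 2 / (x ^ p + x) :=
  stmt_6_general p hp F α x hα hx
end

section
/- Let p be an odd prime and F a field of characteristic p, and let ℘(t) = t^p + t and h(x) = (x^{p-1}-1)/(x^{p-1}+1). Suppose x, y, u ∈ F satisfy x^p + x ≠ 0, y^p + y = x^{p+1}/(x^p + x), and u^p + u = (x+α)^{p+1}/((x+α)^p + (x+α)), where α ∈ F satisfies α^p = -α and x ≠ -α. Then ℘(u - y) = α·h(x) - α^2/(x^p + x). -/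
/-- With `℘(t) = t^p + t`, `g(t) = t^(p+1)/(t^p + t)`, `h(t) = (t^(p-1)-1)/(t^(p-1)+1)`:
if `α^p = -α`, `℘(x) ≠ 0`, `℘(x+α) ≠ 0`, `℘(y) = g(x)` and `℘(u) = g(x+α)`, then
`℘(u - y) = α·h(x) - α²/℘(x)`. -/
theorem stmt_7 (p : ℕ) (hp : p.Prime) (hodd : Odd p)
    (F : Type*) [Field F] [CharP F p] (α x y u : F)
    (hα : α ^ p = -α)
    (hx : x ^ p + x ≠ 0)
    (hxα : (x + α) ^ p + (x + α) ≠ 0)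
    (hy : y ^ p + y = x ^ (p + 1) / (x ^ p + x))
    (hu : u ^ p + u = (x + α) ^ (p + 1) / ((x + α) ^ p + (x + α))) :
    (u - y) ^ p + (u - y) =
      α * ((x ^ (p - 1) - 1) / (x ^ (p - 1) + 1)) - α ^ 2 / (x ^ p + x) := by
  haveI : Fact p.Prime := ⟨hp⟩
  obtain ⟨q, hq⟩ : ∃ q, p = q + 1 := ⟨p - 1, (Nat.succ_pred_eq_of_pos hp.pos).symm⟩
  have hfrob : (x + α) ^ p = x ^ p - α := by
    rw [add_pow_char, hα]; ring
  have hx0 : x ≠ 0 := by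
    rintro rfl; exact hx (by simp [hq])
  have hq1 : x ^ (p - 1) + 1 ≠ 0 := by
    intro h
    apply hx
    have : x ^ p + x = x * (x ^ (p - 1) + 1) := by
      rw [hq]; simp [pow_succ]; ring
    rw [this, h, mul_zero]
  have hL : (u - y) ^ p + (u - y) = (u ^ p + u) - (y ^ p + y) := by
    rw [sub_pow_char]; ring
  rw [hL, hy, hu, hfrob]
  have hxp : x ^ p = x ^ (p - 1) * x := by
    rw [hq]; simp [pow_succ]
  have hxp1 : x ^ (p + 1) = x ^ (p - 1) * x * x := by
    rw [hq]; simp [pow_succ]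
  have hden : x ^ p + x ≠ 0 := hx
  have hxα' : (x ^ p - α) + (x + α) ≠ 0 := by rwa [hfrob] at hxα
  have h2 : (x + α) ^ (p + 1) = (x ^ p - α) * (x + α) := by
    rw [pow_succ, hfrob]
  rw [h2]
  rw [hxp, hxp1] at *
  field_simp
  ring
end
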